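/- arXiv:0809.0110 — 3 statements merged into one kernel-verified Lean document; each statement's English description precedes it below -/
import Mathlib

section
/- Let N1 and N2 be phylogenetic networks on the same label set S. For nodes u of N1 and v of N2, the equivalence u ≡ v (defined recursively: both are leaves with the same label, or u has exactly k children u1,…,uk and v has exactly k children v1,…,vk with u_i ≡ v_i for each i, under a suitable matching) holds if and only if ℓ(u) = ℓ(v), where ℓ is the nested label. -/
open scoped Classical

/-- Nested-label encoding type at nesting depth `n`: an atom of `S`, or a
multiset of encodings of smaller depth. -/
def NLT (S : Type) : ℕ → Type :=
  fun n => Nat.rec S (fun _ ih => S ⊕ Multiset ih) n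

/-- A phylogenetic network on a set `S` of taxa: a rooted finite DAG whose
leaves are bijectively labeled by `S`. -/
structure PhyloNetwork (S : Type) [Fintype S] : Type 1 where
  V : Type
  fintypeV : Fintype V
  arc : V → V → Prop
  acyclic : ∀ v, ¬ Relation.TransGen arc v v
  root : V
  rootConn : ∀ v, Relation.ReflTransGen arc root v
  lab : V → S
  labBij : ∀ s : S, ∃! v, (∀ w, ¬ arc v w) ∧ lab v = s

attribute [instance] PhyloNetwork.fintypeV

variable {S : Type} [Fintype S]

def PhyloNetwork.IsLeaf (N : PhyloNetwork S) (v : N.V) : Prop := ∀ w, ¬ N.arc v w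

noncomputable def PhyloNetwork.children (N : PhyloNetwork S) (v : N.V) : Multiset N.V :=
  (Finset.univ.filter (fun w => N.arc v w)).val

/-- The nested label of a node, encoded at depth `n` (meaningful as soon as
`n` exceeds the height of the node). -/
noncomputable def nlAux (N : PhyloNetwork S) : (n : ℕ) → N.V → NLT S n
  | 0 => fun v => N.lab v
  | n+1 => fun v =>
      if N.IsLeaf v then Sum.inl (N.lab v)
      else Sum.inr ((N.children v).map (nlAux N n))

/-- A sufficient encoding depth for comparing nodes of the two networks. -/
def fuel (N1 N2 : PhyloNetwork S) : ℕ := Fintype.card N1.V + Fintype.card N2.V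

/-- `ℓ(u) = ℓ(v)`: the nested labels of `u` and `v` coincide. -/
def sameNL (N1 N2 : PhyloNetwork S) (u : N1.V) (v : N2.V) : Prop :=
  ∀ n, fuel N1 N2 ≤ n → nlAux N1 n u = nlAux N2 n v

/-- Symmetric difference of multisets. -/
noncomputable def msd {X : Type*} (M1 M2 : Multiset X) : Multiset X :=
  (M1 - M2) + (M2 - M1)

/-- The nested labels representation `Υ(N)` (at encoding depth `n`). -/
noncomputable def upsilon (N : PhyloNetwork S) (n : ℕ) : Multiset (NLT S n) :=
  Finset.univ.val.map (nlAux N n)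

/-- Nakhleh's dissimilarity measure `m`. -/
noncomputable def mdist (N1 N2 : PhyloNetwork S) : ℝ :=
  (Multiset.card (msd (upsilon N1 (fuel N1 N2)) (upsilon N2 (fuel N1 N2))) : ℝ) / 2

/-- `m_i(v)`: number of directed paths from `v` to the leaf labeled `i`. -/
noncomputable def PhyloNetwork.mu (N : PhyloNetwork S) (v : N.V) (i : S) : ℕ :=
  Set.ncard {l : List N.V | l.Chain' N.arc ∧ l.head? = some v ∧
    ∃ w, l.getLast? = some w ∧ N.IsLeaf w ∧ N.lab w = i}

/-- The μ-representation of `N`: the multiset of μ-vectors of its nodes. -/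
noncomputable def muRep (N : PhyloNetwork S) : Multiset (S → ℕ) :=
  Finset.univ.val.map (fun v => N.mu v)

/-- The μ-distance. -/
noncomputable def dmu (N1 N2 : PhyloNetwork S) : ℝ :=
  (Multiset.card (msd (muRep N1) (muRep N2)) : ℝ) / 2

/-- Number of directed paths between two nodes. -/
noncomputable def numPaths (N : PhyloNetwork S) (u w : N.V) : ℕ :=
  Set.ncard {l : List N.V | l.Chain' N.arc ∧ l.head? = some u ∧ l.getLast? = some w}

/-- Leaf-label preserving isomorphism of phylogenetic networks. -/
def PhyloIso (N1 N2 : PhyloNetwork S) : Prop :=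
  ∃ e : N1.V ≃ N2.V, (∀ u v, N1.arc u v ↔ N2.arc (e u) (e v)) ∧
    ∀ v, N1.IsLeaf v → N2.lab (e v) = N1.lab v

/-- Height of a node: the largest length of a directed path from it to a leaf. -/
noncomputable def PhyloNetwork.height (N : PhyloNetwork S) (v : N.V) : ℕ :=
  sSup {k | ∃ l : List N.V, l.Chain' N.arc ∧ l.head? = some v ∧
    (∃ w, l.getLast? = some w ∧ N.IsLeaf w) ∧ l.length = k + 1}

/-- Nakhleh's node equivalence: `u ≡ v` when both are leaves with the same
label, or `u` has exactly `k ≥ 1` children `u1,…,uk` and `v` has exactly `k`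
children `v1,…,vk` with `u_i ≡ v_i` for each `i` under a suitable matching. -/
inductive NEquiv (N1 N2 : PhyloNetwork S) : N1.V → N2.V → Prop where
  | leaf {u : N1.V} {v : N2.V} :
      N1.IsLeaf u → N2.IsLeaf v → N1.lab u = N2.lab v → NEquiv N1 N2 u v
  | node {u : N1.V} {v : N2.V} (l1 : List N1.V) (l2 : List N2.V) :
      l1 ≠ [] → N1.children u = (l1 : Multiset N1.V) →
      N2.children v = (l2 : Multiset N2.V) →
      List.Forall₂ (NEquiv N1 N2) l1 l2 → NEquiv N1 N2 u v

section Aux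

variable {N N1 N2 : PhyloNetwork S}

lemma chain_transGen {α : Type*} {r : α → α → Prop} :
    ∀ {l : List α} {a : α}, List.Chain r a l → ∀ b ∈ l, Relation.TransGen r a b := by
  intro l
  induction l with
  | nil => intro a _ b hb; simp at hb
  | cons c t ih =>
    intro a h b hb
    replace h : r a c ∧ List.Chain r c t := List.isChain_cons_cons.mp h
    rcases List.mem_cons.mp hb with rfl | hb
    · exact Relation.TransGen.single h.1
    · exact Relation.TransGen.head h.1 (ih h.2 b hb)

lemma chain'_nodup {α : Type*} {r : α → α → Prop} (hac : ∀ x, ¬ Relation.TransGen r x x) :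
    ∀ {l : List α}, l.Chain' r → l.Nodup := by
  intro l
  induction l with
  | nil => intro _; simp
  | cons a t ih =>
    intro h
    have h' : List.Chain r a t := h
    refine List.nodup_cons.mpr ⟨fun ha => hac a (chain_transGen h' a ha), ih h.tail⟩

lemma chain'_length_le {l : List N.V} (hl : l.Chain' N.arc) : l.length ≤ Fintype.card N.V :=
  List.Nodup.length_le_card (chain'_nodup N.acyclic hl)

lemma mem_children {v c : N.V} : c ∈ N.children v ↔ N.arc v c := by
  simp [PhyloNetwork.children, Finset.mem_filter]

lemma children_eq_zero_iff {v : N.V} : N.children v = 0 ↔ N.IsLeaf v := by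
  constructor
  · intro h w hw
    have : w ∈ N.children v := mem_children.mpr hw
    rw [h] at this; simp at this
  · intro h
    rw [Multiset.eq_zero_iff_forall_notMem]
    intro c hc
    exact h c (mem_children.mp hc)

/-- The set of path-lengths-minus-one from `v` to a leaf. -/
def hset (N : PhyloNetwork S) (v : N.V) : Set ℕ :=
  {k | ∃ l : List N.V, l.Chain' N.arc ∧ l.head? = some v ∧
    (∃ w, l.getLast? = some w ∧ N.IsLeaf w) ∧ l.length = k + 1}

lemma height_eq (v : N.V) : N.height v = sSup (hset N v) := rfl

lemma arc_wf (N : PhyloNetwork S) : WellFounded (fun a b : N.V => N.arc b a) := by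
  haveI : IsIrrefl N.V (Relation.TransGen (fun a b : N.V => N.arc b a)) :=
    ⟨fun x hx => N.acyclic x (Relation.transGen_swap.mp hx)⟩
  have htg : WellFounded (Relation.TransGen (fun a b : N.V => N.arc b a)) :=
    Finite.wellFounded_of_trans_of_irrefl _
  exact Subrelation.wf (q := fun a b : N.V => N.arc b a) (r := Relation.TransGen (fun a b : N.V => N.arc b a))
    (fun h => Relation.TransGen.single h) htg

lemma exists_leaf_path (N : PhyloNetwork S) (v : N.V) :
    ∃ l : List N.V, l.Chain' N.arc ∧ l.head? = some v ∧
      ∃ w, l.getLast? = some w ∧ N.IsLeaf w := by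
  induction v using WellFounded.induction (arc_wf N) with
  | _ v ih =>
    by_cases hv : N.IsLeaf v
    · exact ⟨[v], List.isChain_singleton v, by simp, v, by simp, hv⟩
    · simp only [PhyloNetwork.IsLeaf, not_forall, not_not] at hv
      obtain ⟨c, hc⟩ := hv
      obtain ⟨l, hl, hhead, w, hlast, hw⟩ := ih c hc
      have hlne : l ≠ [] := by intro h; rw [h] at hhead; simp at hhead
      refine ⟨v :: l, ?_, by simp, w, ?_, hw⟩
      · apply List.isChain_cons.mpr
        refine ⟨fun b hb => ?_, hl⟩
        rw [hhead] at hb; simp at hb; exact hb ▸ hc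
      · exact List.mem_getLast?_cons hlast

lemma hset_nonempty (v : N.V) : (hset N v).Nonempty := by
  obtain ⟨l, hl, hhead, w, hlast, hw⟩ := exists_leaf_path N v
  have hlne : l ≠ [] := by intro h; rw [h] at hhead; simp at hhead
  refine ⟨l.length - 1, l, hl, hhead, ⟨w, hlast, hw⟩, ?_⟩
  have : 1 ≤ l.length := List.length_pos_iff.mpr hlne
  omega

lemma hset_bddAbove (v : N.V) : BddAbove (hset N v) := by
  refine ⟨Fintype.card N.V, fun k hk => ?_⟩
  obtain ⟨l, hl, _, _, hlen⟩ := hk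
  have := chain'_length_le hl
  omega

lemma height_mem (v : N.V) : N.height v ∈ hset N v := by
  rw [height_eq]
  exact Nat.sSup_mem (hset_nonempty v) (hset_bddAbove v)

lemma height_lt_card (v : N.V) : N.height v < Fintype.card N.V := by
  obtain ⟨l, hl, _, _, hlen⟩ := height_mem v
  have := chain'_length_le hl
  omega

lemma height_child_lt {u c : N.V} (h : N.arc u c) : N.height c < N.height u := by
  obtain ⟨l, hl, hhead, ⟨w, hlast, hw⟩, hlen⟩ := height_mem c
  have hlne : l ≠ [] := by intro h'; rw [h'] at hhead; simp at hhead
  have hmem : N.height c + 1 ∈ hset N u := by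
    refine ⟨u :: l, ?_, by simp, ⟨w, ?_, hw⟩, by simp [hlen]⟩
    · apply List.isChain_cons.mpr
      refine ⟨fun b hb => ?_, hl⟩
      rw [hhead] at hb; simp at hb; exact hb ▸ h
    · exact List.mem_getLast?_cons hlast
  have : N.height c + 1 ≤ N.height u := by
    rw [height_eq]
    exact le_csSup (hset_bddAbove u) hmem
  omega

lemma nlAux_succ (N : PhyloNetwork S) (n : ℕ) (v : N.V) :
    nlAux N (n+1) v =
      if N.IsLeaf v then Sum.inl (N.lab v)
      else Sum.inr ((N.children v).map (nlAux N n)) := rfl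

lemma forall₂_map_eq {α β γ : Type*} {f : α → γ} {g : β → γ} :
    ∀ {l1 : List α} {l2 : List β}, List.Forall₂ (fun a b => f a = g b) l1 l2 →
      l1.map f = l2.map g := by
  intro l1 l2 h
  induction h with
  | nil => rfl
  | cons h _ ih => simp [ih, h]

lemma multiset_map_eq_pairing {α β γ : Type*} {f : α → γ} {g : β → γ} :
    ∀ (M1 : Multiset α) (M2 : Multiset β), M1.map f = M2.map g →
      ∃ (l1 : List α) (l2 : List β), M1 = (l1 : Multiset α) ∧ M2 = (l2 : Multiset β) ∧
        List.Forall₂ (fun a b => f a = g b) l1 l2 := by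
  intro M1
  induction M1 using Multiset.induction with
  | empty =>
    intro M2 h
    have : M2.map g = 0 := h.symm
    rw [Multiset.map_eq_zero] at this
    exact ⟨[], [], rfl, by simp [this], List.Forall₂.nil⟩
  | cons a M ih =>
    intro M2 h
    have hmem : f a ∈ M2.map g := by rw [← h]; simp
    obtain ⟨b, hb, hgb⟩ := Multiset.mem_map.mp hmem
    obtain ⟨M2', rfl⟩ := Multiset.exists_cons_of_mem hb
    rw [Multiset.map_cons, Multiset.map_cons, ← hgb] at h
    have h' : M.map f = M2'.map g := by
      exact (Multiset.cons_inj_right _).mp h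
    obtain ⟨l1, l2, e1, e2, hf⟩ := ih M2' h'
    exact ⟨a :: l1, b :: l2, by simp [e1], by simp [e2], List.Forall₂.cons hgb.symm hf⟩

lemma forall₂_strengthen {α β : Type*} {R Q : α → β → Prop} :
    ∀ {l1 : List α} {l2 : List β}, List.Forall₂ R l1 l2 →
      (∀ a ∈ l1, ∀ b ∈ l2, R a b → Q a b) → List.Forall₂ Q l1 l2 := by
  intro l1 l2 h
  induction h with
  | nil => intro _; exact List.Forall₂.nil
  | @cons a b t1 t2 hab _ ih =>
    intro hstr
    exact List.Forall₂.cons (hstr a (by simp) b (by simp) hab)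
      (ih fun x hx y hy => hstr x (by simp [hx]) y (by simp [hy]))

lemma nequiv_nlAux (N1 N2 : PhyloNetwork S) :
    ∀ (m : ℕ) (u : N1.V) (v : N2.V), N1.height u = m → NEquiv N1 N2 u v →
      ∀ n, N1.height u < n → N2.height v < n → nlAux N1 n u = nlAux N2 n v := by
  intro m
  induction m using Nat.strong_induction_on with
  | _ m ih =>
    intro u v hm h n hn1 hn2
    obtain ⟨k, rfl⟩ : ∃ k, n = k + 1 := ⟨n - 1, by omega⟩
    cases h with
    | leaf h1 h2 h3 => rw [nlAux_succ, nlAux_succ, if_pos h1, if_pos h2, h3]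
    | node l1 l2 hne hc1 hc2 hf =>
      have hul : ¬ N1.IsLeaf u := by
        intro hl
        have := children_eq_zero_iff.mpr hl
        rw [hc1] at this
        exact hne (by simpa using this)
      have hl2ne : l2 ≠ [] := by
        intro h
        subst h
        exact hne (List.forall₂_nil_right_iff.mp hf)
      have hvl : ¬ N2.IsLeaf v := by
        intro hl
        have := children_eq_zero_iff.mpr hl
        rw [hc2] at this
        exact hl2ne (by simpa using this)
      rw [nlAux_succ, nlAux_succ, if_neg hul, if_neg hvl]
      congr 1
      rw [hc1, hc2, Multiset.map_coe, Multiset.map_coe]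
      congr 1
      apply forall₂_map_eq
      refine forall₂_strengthen hf ?_
      intro a ha b hb hab
      have hau : N1.arc u a := mem_children.mp (by rw [hc1]; exact Multiset.mem_coe.mpr ha)
      have hbv : N2.arc v b := mem_children.mp (by rw [hc2]; exact Multiset.mem_coe.mpr hb)
      have h1 : N1.height a < m := hm ▸ height_child_lt hau
      have h2 : N2.height b < N2.height v := height_child_lt hbv
      exact ih (N1.height a) h1 a b rfl hab k (by omega) (by omega)

lemma nlAux_nequiv (N1 N2 : PhyloNetwork S) :
    ∀ (n : ℕ) (u : N1.V) (v : N2.V), N1.height u < n → N2.height v < n →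
      nlAux N1 n u = nlAux N2 n v → NEquiv N1 N2 u v := by
  intro n
  induction n with
  | zero => intro u v h; omega
  | succ k ih =>
    intro u v hn1 hn2 heq
    rw [nlAux_succ, nlAux_succ] at heq
    by_cases hu : N1.IsLeaf u <;> by_cases hv : N2.IsLeaf v
    · rw [if_pos hu, if_pos hv] at heq
      exact NEquiv.leaf hu hv (Sum.inl.inj heq)
    · rw [if_pos hu, if_neg hv] at heq; exact absurd heq (by simp)
    · rw [if_neg hu, if_pos hv] at heq; exact absurd heq (by simp)
    · rw [if_neg hu, if_neg hv] at heq
      have hmap : (N1.children u).map (nlAux N1 k) = (N2.children v).map (nlAux N2 k) :=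
        Sum.inr.inj heq
      obtain ⟨l1, l2, hc1, hc2, hf⟩ := multiset_map_eq_pairing _ _ hmap
      have hne : l1 ≠ [] := by
        intro h
        subst h
        exact hu (children_eq_zero_iff.mp (by simpa using hc1))
      refine NEquiv.node l1 l2 hne hc1 hc2 ?_
      refine forall₂_strengthen hf ?_
      intro a ha b hb hab
      have hau : N1.arc u a := mem_children.mp (by rw [hc1]; exact Multiset.mem_coe.mpr ha)
      have hbv : N2.arc v b := mem_children.mp (by rw [hc2]; exact Multiset.mem_coe.mpr hb)
      have h1 : N1.height a < N1.height u := height_child_lt hau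
      have h2 : N2.height b < N2.height v := height_child_lt hbv
      exact ih a b (by omega) (by omega) hab

end Aux

/-- Nodes `u` of `N1` and `v` of `N2` are Nakhleh-equivalent if and only if
their nested labels coincide: `ℓ(u) = ℓ(v)`. -/
theorem nequiv_iff_sameNL (N1 N2 : PhyloNetwork S) (u : N1.V) (v : N2.V) :
    NEquiv N1 N2 u v ↔ sameNL N1 N2 u v := by
  have hc1 : 0 < Fintype.card N1.V := Fintype.card_pos_iff.mpr ⟨N1.root⟩
  have hc2 : 0 < Fintype.card N2.V := Fintype.card_pos_iff.mpr ⟨N2.root⟩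
  have hu : N1.height u < fuel N1 N2 := by
    have := height_lt_card u
    unfold fuel; omega
  have hv : N2.height v < fuel N1 N2 := by
    have := height_lt_card v
    unfold fuel; omega
  constructor
  · intro h n hn
    exact nequiv_nlAux N1 N2 (N1.height u) u v rfl h n (by omega) (by omega)
  · intro h
    exact nlAux_nequiv N1 N2 (fuel N1 N2) u v hu hv (h _ le_rfl)
end

section
/- If f : A → B and g : A → C are functions on a finite set A such that for all a, a' ∈ A, f(a) = f(a') implies g(a) = g(a'), then for any finite set A' with functions f' : A' → B, g' : A' → C satisfying the same implication (also across the two sets: f(a) = f'(a') implies g(a) = g'(a')), the cardinality of the multiset symmetric difference of the images under g (with multiplicity) is at most that under f: |g(A) △ g'(A')| ≤ |f(A) △ f'(A')|. In particular, for phylogenetic networks N1, N2 on the same taxa set, m(N1,N2) ≥ d_μ(N1,N2). -/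
open scoped Classical

variable {S : Type} [Fintype S]

namespace Aux

variable {S : Type} [Fintype S]

/-- The set of paths from `v` to the leaf labeled `i`. -/
def pathSet (N : PhyloNetwork S) (v : N.V) (i : S) : Set (List N.V) :=
  {l : List N.V | l.Chain' N.arc ∧ l.head? = some v ∧
    ∃ w, l.getLast? = some w ∧ N.IsLeaf w ∧ N.lab w = i}

lemma mu_eq (N : PhyloNetwork S) (v : N.V) (i : S) :
    N.mu v i = (pathSet N v i).ncard := rfl

lemma chain_nodup {N : PhyloNetwork S} {l : List N.V} (h : l.Chain' N.arc) : l.Nodup := by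
  have htg : l.Chain' (Relation.TransGen N.arc) :=
    List.IsChain.imp (fun a b hab => Relation.TransGen.single hab) h
  have : IsTrans N.V (Relation.TransGen N.arc) := ⟨fun _ _ _ => Relation.TransGen.trans⟩
  have hp := List.isChain_iff_pairwise.mp htg
  exact hp.imp (fun hab => by rintro rfl; exact N.acyclic _ hab)

lemma pathSet_finite (N : PhyloNetwork S) (v : N.V) (i : S) : (pathSet N v i).Finite := by
  apply Set.Finite.subset (List.finite_length_le N.V (Fintype.card N.V))
  intro l hl
  exact (chain_nodup hl.1).length_le_card

lemma pathSet_leaf {N : PhyloNetwork S} {v : N.V} (hv : N.IsLeaf v) (i : S) :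
    pathSet N v i = if N.lab v = i then {[v]} else ∅ := by
  have hmem : ∀ l ∈ pathSet N v i, l = [v] ∧ N.lab v = i := by
    rintro l ⟨hc, hh, w, hg, hw, hlab⟩
    match l, hh with
    | a :: t, hh =>
      have ha : a = v := by simpa using hh
      subst ha
      match t with
      | [] =>
        simp only [List.getLast?_singleton, Option.some_inj] at hg
        exact ⟨rfl, hg ▸ hlab⟩
      | b :: t' =>
        exact absurd (List.isChain_cons_cons.mp hc).1 (hv b)
  split_ifs with hi
  · apply Set.eq_singleton_iff_unique_mem.mpr
    refine ⟨⟨?_, rfl, v, ?_, hv, hi⟩, fun l hl => (hmem l hl).1⟩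
    · exact List.isChain_singleton v
    · simp
  · ext l
    simp only [Set.mem_empty_iff_false, iff_false]
    intro hl
    exact hi (hmem l hl).2

lemma mu_leaf {N : PhyloNetwork S} {v : N.V} (hv : N.IsLeaf v) (i : S) :
    N.mu v i = if N.lab v = i then 1 else 0 := by
  rw [mu_eq, pathSet_leaf hv]
  split_ifs <;> simp

/-- children as a finset -/
noncomputable def childFinset (N : PhyloNetwork S) (v : N.V) : Finset N.V :=
  Finset.univ.filter (fun w => N.arc v w)

lemma children_eq (N : PhyloNetwork S) (v : N.V) :
    N.children v = (childFinset N v).val := rfl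

lemma pathSet_cons {N : PhyloNetwork S} {v : N.V} (hv : ¬ N.IsLeaf v) (i : S) :
    pathSet N v i = ⋃ w ∈ childFinset N v, (fun t => v :: t) '' pathSet N w i := by
  ext l
  simp only [Set.mem_iUnion, Set.mem_image, childFinset, Finset.mem_filter, Finset.mem_univ,
    true_and]
  constructor
  · rintro ⟨hc, hh, w0, hg, hw0, hlab⟩
    match l, hh with
    | a :: t, hh =>
      have ha : a = v := by simpa using hh
      subst ha
      match t with
      | [] =>
        simp only [List.getLast?_singleton, Option.some_inj] at hg
        exact absurd hv (by simp [hg ▸ hw0])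
      | b :: t' =>
        have hcc := List.isChain_cons_cons.mp hc
        refine ⟨b, hcc.1, b :: t', ⟨hcc.2, rfl, w0, ?_, hw0, hlab⟩, rfl⟩
        rw [List.getLast?_cons_cons] at hg
        exact hg
  · rintro ⟨w, harc, ⟨t, ⟨hc, hh, w0, hg, hw0, hlab⟩, rfl⟩⟩
    match t, hh with
    | b :: t', hh =>
      have hb : b = w := by simpa using hh
      refine ⟨List.isChain_cons_cons.mpr ⟨hb ▸ harc, hc⟩, rfl, w0, ?_, hw0, hlab⟩
      rw [List.getLast?_cons_cons]
      exact hg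

lemma mu_sum_children {N : PhyloNetwork S} {v : N.V} (hv : ¬ N.IsLeaf v) (i : S) :
    N.mu v i = ∑ w ∈ childFinset N v, N.mu w i := by
  classical
  rw [mu_eq, pathSet_cons hv i]
  have hfin : ∀ w, (pathSet N w i).Finite := fun w => pathSet_finite N w i
  set F : N.V → Finset (List N.V) :=
    fun w => ((hfin w).toFinset.image (fun t => v :: t)) with hF
  have hhead : ∀ w, ∀ l ∈ F w, ∃ t, t.head? = some w ∧ l = v :: t := by
    intro w l hl
    simp only [hF, Finset.mem_image, Set.Finite.mem_toFinset] at hl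
    obtain ⟨t, ht, rfl⟩ := hl
    exact ⟨t, ht.2.1, rfl⟩
  have hset : (⋃ w ∈ childFinset N v, (fun t => v :: t) '' pathSet N w i)
      = ↑((childFinset N v).biUnion F) := by
    ext l
    simp [hF, Set.Finite.mem_toFinset]
  rw [hset, Set.ncard_coe_finset]
  rw [Finset.card_biUnion]
  · apply Finset.sum_congr rfl
    intro w _
    rw [hF]
    rw [Finset.card_image_of_injective _ (List.cons_injective)]
    rw [mu_eq, Set.ncard_eq_toFinset_card _ (hfin w)]
  · intro w _ w' _ hne
    rw [Function.onFun, Finset.disjoint_left]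
    intro l hl hl'
    obtain ⟨t, ht, rfl⟩ := hhead w l hl
    obtain ⟨t', ht', heq⟩ := hhead w' _ hl'
    apply hne
    have : t = t' := by injection heq
    rw [this] at ht
    rw [ht] at ht'
    exact Option.some_inj.mp ht'

lemma exists_path_to_leaf (N : PhyloNetwork S) (v : N.V) :
    ∃ l : List N.V, l.Chain' N.arc ∧ l.head? = some v ∧
      ∃ w, l.getLast? = some w ∧ N.IsLeaf w := by
  have hwf : WellFounded (fun a b : N.V => N.arc b a) := by
    have ht : IsTrans N.V (Relation.TransGen (fun a b : N.V => N.arc b a)) :=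
      ⟨fun _ _ _ => Relation.TransGen.trans⟩
    have hirr : IsIrrefl N.V (Relation.TransGen (fun a b : N.V => N.arc b a)) := by
      constructor
      intro a ha
      exact N.acyclic a ((Relation.transGen_swap).mp ha)
    have hwf' := Finite.wellFounded_of_trans_of_irrefl
      (Relation.TransGen (fun a b : N.V => N.arc b a))
    refine Subrelation.wf ?_ hwf'
    intro x y h
    exact Relation.TransGen.single h
  induction v using WellFounded.induction hwf with
  | _ v ih =>
    by_cases hv : N.IsLeaf v
    · exact ⟨[v], List.isChain_singleton v, rfl, v, by simp, hv⟩
    · simp only [PhyloNetwork.IsLeaf, not_forall, not_not] at hv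
      obtain ⟨w, hw⟩ := hv
      obtain ⟨l, hc, hh, w0, hg, hw0⟩ := ih w hw
      match l, hh with
      | b :: t, hh =>
        have hb : b = w := by simpa using hh
        refine ⟨v :: b :: t, List.isChain_cons_cons.mpr ⟨hb ▸ hw, hc⟩, rfl, w0, ?_, hw0⟩
        rw [List.getLast?_cons_cons]
        exact hg

/-- The set whose sup is the height. -/
def heightSet (N : PhyloNetwork S) (v : N.V) : Set ℕ :=
  {k | ∃ l : List N.V, l.Chain' N.arc ∧ l.head? = some v ∧
    (∃ w, l.getLast? = some w ∧ N.IsLeaf w) ∧ l.length = k + 1}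

lemma height_eq (N : PhyloNetwork S) (v : N.V) : N.height v = sSup (heightSet N v) := rfl

lemma heightSet_nonempty (N : PhyloNetwork S) (v : N.V) : (heightSet N v).Nonempty := by
  obtain ⟨l, hc, hh, hw⟩ := exists_path_to_leaf N v
  have hlen : l.length ≠ 0 := by
    intro h0
    rw [List.length_eq_zero_iff] at h0
    subst h0
    simp at hh
  refine ⟨l.length - 1, l, hc, hh, hw, ?_⟩
  omega

lemma heightSet_bdd (N : PhyloNetwork S) (v : N.V) :
    BddAbove (heightSet N v) := by
  refine ⟨Fintype.card N.V, ?_⟩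
  rintro k ⟨l, hc, _, _, hlen⟩
  have := (chain_nodup hc).length_le_card
  omega

lemma height_mem (N : PhyloNetwork S) (v : N.V) : N.height v ∈ heightSet N v := by
  rw [height_eq]
  exact Nat.sSup_mem (heightSet_nonempty N v) (heightSet_bdd N v)

lemma height_succ_le_card (N : PhyloNetwork S) (v : N.V) :
    N.height v + 1 ≤ Fintype.card N.V := by
  obtain ⟨l, hc, _, _, hlen⟩ := height_mem N v
  have := (chain_nodup hc).length_le_card
  omega

lemma height_lt_of_arc {N : PhyloNetwork S} {v w : N.V} (h : N.arc v w) :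
    N.height w < N.height v := by
  obtain ⟨l, hc, hh, hw, hlen⟩ := height_mem N w
  match l, hh with
  | b :: t, hh =>
    have hb : b = w := by simpa using hh
    have hmem : N.height w + 1 ∈ heightSet N v := by
      refine ⟨v :: b :: t, List.isChain_cons_cons.mpr ⟨hb ▸ h, hc⟩, rfl, ?_, by simp [← hlen]⟩
      obtain ⟨w0, hg, hw0⟩ := hw
      exact ⟨w0, by rw [List.getLast?_cons_cons]; exact hg, hw0⟩
    have h1 := le_csSup (heightSet_bdd N v) hmem
    have h2 : N.height v = sSup (heightSet N v) := rfl
    omega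


lemma card_msd (M N : Multiset X) :
    Multiset.card (msd M N) + 2 * Multiset.card (M ∩ N) = Multiset.card M + Multiset.card N := by
  have h1 := congrArg Multiset.card (Multiset.sub_add_inter M N)
  have h2 := congrArg Multiset.card (Multiset.sub_add_inter N M)
  rw [Multiset.inter_comm] at h2
  simp only [Multiset.card_add] at h1 h2
  simp only [msd, Multiset.card_add]
  omega

lemma card_msd_map_le {B C : Type*} (h : B → C) (M M' : Multiset B) :
    Multiset.card (msd (M.map h) (M'.map h)) ≤ Multiset.card (msd M M') := by
  have k1 := card_msd (M.map h) (M'.map h)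
  have k2 := card_msd M M'
  have k3 : (M ∩ M').map h ≤ M.map h ∩ M'.map h :=
    Multiset.le_inter (Multiset.map_le_map (Multiset.inter_le_left))
      (Multiset.map_le_map (Multiset.inter_le_right))
  have k4 := Multiset.card_le_card k3
  simp only [Multiset.card_map] at *
  omega

lemma key_card {A A' B C : Type*} [Fintype A] [Fintype A']
    (f : A → B) (g : A → C) (f' : A' → B) (g' : A' → C)
    (h1 : ∀ a a' : A, f a = f a' → g a = g a')
    (h2 : ∀ a a' : A', f' a = f' a' → g' a = g' a')
    (h3 : ∀ (a : A) (a' : A'), f a = f' a' → g a = g' a') :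
    Multiset.card (msd (Finset.univ.val.map g) (Finset.univ.val.map g')) ≤
      Multiset.card (msd (Finset.univ.val.map f) (Finset.univ.val.map f')) := by
  by_cases hC : Nonempty C
  · have : Inhabited C := ⟨hC.some⟩
    set h : B → C := fun b =>
      if hb : ∃ a : A, f a = b then g hb.choose
      else if hb' : ∃ a' : A', f' a' = b then g' hb'.choose
      else default with hdef
    have hf : ∀ a : A, h (f a) = g a := by
      intro a
      have hb : ∃ a0 : A, f a0 = f a := ⟨a, rfl⟩
      simp only [hdef, dif_pos hb]
      exact h1 _ _ hb.choose_spec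
    have hf' : ∀ a' : A', h (f' a') = g' a' := by
      intro a'
      by_cases hb : ∃ a0 : A, f a0 = f' a'
      · simp only [hdef, dif_pos hb]
        exact h3 _ _ hb.choose_spec
      · have hb' : ∃ a0 : A', f' a0 = f' a' := ⟨a', rfl⟩
        simp only [hdef, dif_neg hb, dif_pos hb']
        exact h2 _ _ hb'.choose_spec
    have e1 : Finset.univ.val.map g = (Finset.univ.val.map f).map h := by
      rw [Multiset.map_map]; exact (Multiset.map_congr rfl (fun a _ => (hf a).symm))
    have e2 : Finset.univ.val.map g' = (Finset.univ.val.map f').map h := by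
      rw [Multiset.map_map]; exact (Multiset.map_congr rfl (fun a _ => (hf' a).symm))
    rw [e1, e2]
    exact card_msd_map_le h _ _
  · have : IsEmpty C := not_nonempty_iff.mp hC
    have : IsEmpty A := ⟨fun a => this.false (g a)⟩
    have : IsEmpty A' := ⟨fun a => ‹IsEmpty C›.false (g' a)⟩
    simp [Finset.univ_eq_empty, msd]


lemma nl_determines_mu (M1 M2 : PhyloNetwork S) :
    ∀ (n : ℕ) (u : M1.V) (v : M2.V), M1.height u + 1 ≤ n →
      nlAux M1 n u = nlAux M2 n v → M1.mu u = M2.mu v := by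
  intro n
  induction n with
  | zero => intro u v h; omega
  | succ m ih =>
    intro u v hht hnl
    replace hnl : (if M1.IsLeaf u then (Sum.inl (M1.lab u) : S ⊕ Multiset (NLT S m))
        else Sum.inr ((M1.children u).map (nlAux M1 m))) =
        (if M2.IsLeaf v then (Sum.inl (M2.lab v) : S ⊕ Multiset (NLT S m))
        else Sum.inr ((M2.children v).map (nlAux M2 m))) := hnl
    by_cases hu : M1.IsLeaf u <;> by_cases hv2 : M2.IsLeaf v
    · simp only [nlAux, if_pos hu, if_pos hv2] at hnl
      have hlab : M1.lab u = M2.lab v := Sum.inl.inj hnl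
      funext i
      rw [mu_leaf hu, mu_leaf hv2, hlab]
    · simp only [nlAux, if_pos hu, if_neg hv2] at hnl
      exact absurd hnl (by simp)
    · simp only [nlAux, if_neg hu, if_pos hv2] at hnl
      exact absurd hnl (by simp)
    · simp only [nlAux, if_neg hu, if_neg hv2] at hnl
      have hmul : (M1.children u).map (nlAux M1 m) = (M2.children v).map (nlAux M2 m) :=
        Sum.inr.inj hnl
      have hrel : Multiset.Rel (fun a b => nlAux M1 m a = nlAux M2 m b)
          (M1.children u) (M2.children v) :=
        Multiset.rel_map.mp (Multiset.rel_eq.mpr hmul)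
      have hrel2 : Multiset.Rel (fun a b => M1.mu a = M2.mu b)
          (M1.children u) (M2.children v) := by
        refine hrel.mono ?_
        intro a ha b hb hab
        have harc : M1.arc u a := by
          simp only [PhyloNetwork.children, Finset.mem_val, Finset.mem_filter] at ha
          exact ha.2
        have := height_lt_of_arc harc
        exact ih a b (by omega) hab
      have hmaps : (M1.children u).map M1.mu = (M2.children v).map M2.mu :=
        Multiset.rel_eq.mp (Multiset.rel_map.mpr hrel2)
      funext i
      rw [mu_sum_children hu i, mu_sum_children hv2 i]
      have hsum := congrArg (fun M => (Multiset.map (fun φ : S → ℕ => φ i) M).sum) hmaps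
      simp only [Multiset.map_map, Function.comp] at hsum
      simpa [Finset.sum, childFinset, PhyloNetwork.children] using hsum

end Aux

/-- If `f, g` on a finite set `A` and `f', g'` on a finite set `A'` are such
that equality of `f`-values implies equality of `g`-values (within each set
and across the two sets), then the cardinality of the multiset symmetric
difference of the images under `g` is at most that under `f`. In particular,
for phylogenetic networks over the same taxa set, `m(N1,N2) ≥ d_μ(N1,N2)`. -/
theorem symmdiff_card_mono_of_determines {A A' B C : Type*}
    [Fintype A] [Fintype A']
    (f : A → B) (g : A → C) (f' : A' → B) (g' : A' → C)
    (h1 : ∀ a a' : A, f a = f a' → g a = g a')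
    (h2 : ∀ a a' : A', f' a = f' a' → g' a = g' a')
    (h3 : ∀ (a : A) (a' : A'), f a = f' a' → g a = g' a') :
    Multiset.card (msd (Finset.univ.val.map g) (Finset.univ.val.map g')) ≤
      Multiset.card (msd (Finset.univ.val.map f) (Finset.univ.val.map f')) ∧
    ∀ (T : Type) [Fintype T] (N1 N2 : PhyloNetwork T), dmu N1 N2 ≤ mdist N1 N2 := by
  constructor
  · exact Aux.key_card f g f' g' h1 h2 h3
  · intro T _ N1 N2
    have hc1 : 0 < Fintype.card N1.V := Fintype.card_pos_iff.mpr ⟨N1.root⟩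
    have hc2 : 0 < Fintype.card N2.V := Fintype.card_pos_iff.mpr ⟨N2.root⟩
    have key := Aux.key_card (nlAux N1 (fuel N1 N2)) N1.mu (nlAux N2 (fuel N1 N2)) N2.mu
      (fun a a' h => Aux.nl_determines_mu N1 N1 _ a a'
        (by have := Aux.height_succ_le_card N1 a; simp only [fuel]; omega) h)
      (fun a a' h => Aux.nl_determines_mu N2 N2 _ a a'
        (by have := Aux.height_succ_le_card N2 a; simp only [fuel]; omega) h)
      (fun a a' h => Aux.nl_determines_mu N1 N2 _ a a'
        (by have := Aux.height_succ_le_card N1 a; simp only [fuel]; omega) h)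
    rw [dmu, mdist]
    have hcast : (Multiset.card (msd (muRep N1) (muRep N2)) : ℝ) ≤
        (Multiset.card (msd (upsilon N1 (fuel N1 N2)) (upsilon N2 (fuel N1 N2))) : ℝ) := by
      exact_mod_cast key
    linarith
end

section
/- For every n ≥ 2 and every K, there exist phylogenetic networks N1 and N2 on the same set of n taxa with m(N1, N2) > K; i.e., Nakhleh's measure m is unbounded on phylogenetic networks with a fixed leaf set. -/
open scoped Classical

variable {S : Type} [Fintype S]

/-- Arc relation of the chain network: a path of `k+1` internal nodes,
the last one being parent of all `n` leaves. -/
def carc (n k : ℕ) : (Fin n ⊕ Fin (k+1)) → (Fin n ⊕ Fin (k+1)) → Prop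
  | Sum.inr j, Sum.inr j' => (j' : ℕ) = (j : ℕ) + 1
  | Sum.inr j, Sum.inl _ => (j : ℕ) = k
  | _, _ => False

/-- Rank function witnessing acyclicity. -/
def crank (n k : ℕ) : Fin n ⊕ Fin (k+1) → ℕ
  | Sum.inl _ => k + 1
  | Sum.inr j => (j : ℕ)

lemma carc_rank {n k : ℕ} {v w : Fin n ⊕ Fin (k+1)} (h : carc n k v w) :
    crank n k v < crank n k w := by
  cases v with
  | inl i => cases w <;> exact absurd h (by simp [carc])
  | inr j =>
    cases w with
    | inl i => have : (j : ℕ) = k := h; simp only [crank]; omega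
    | inr j' => have : (j' : ℕ) = (j : ℕ) + 1 := h; simp only [crank]; omega

lemma carc_chain_conn {n k : ℕ} (m : ℕ) (hm : m < k + 1) :
    Relation.ReflTransGen (carc n k) (Sum.inr ⟨0, Nat.succ_pos k⟩) (Sum.inr ⟨m, hm⟩) := by
  induction m with
  | zero => exact Relation.ReflTransGen.refl
  | succ p ih =>
    exact Relation.ReflTransGen.tail (ih (by omega)) (by simp [carc])

/-- The chain network. -/
noncomputable def chainNet (n k : ℕ) (hn : 1 ≤ n) : PhyloNetwork (Fin n) where
  V := Fin n ⊕ Fin (k+1)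
  fintypeV := inferInstance
  arc := carc n k
  acyclic := by
    intro v hv
    have : ∀ a b, Relation.TransGen (carc n k) a b →
        crank n k a < crank n k b := by
      intro a b h
      induction h with
      | single h => exact carc_rank h
      | tail _ h ih => exact ih.trans (carc_rank h)
    exact absurd (this v v hv) (lt_irrefl _)
  root := Sum.inr ⟨0, Nat.succ_pos k⟩
  rootConn := by
    intro v
    cases v with
    | inr j =>
      have := carc_chain_conn (n := n) (k := k) j.1 j.2
      simpa using this
    | inl i =>
      exact Relation.ReflTransGen.tail (carc_chain_conn k (Nat.lt_succ_self k))
        (by simp [carc])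
  lab := Sum.elim id (fun _ => ⟨0, hn⟩)
  labBij := by
    intro s
    refine ⟨Sum.inl s, ⟨?_, rfl⟩, ?_⟩
    · intro w
      cases w <;> simp [carc]
    · rintro v ⟨hleaf, hlab⟩
      cases v with
      | inl i => simpa using hlab
      | inr j =>
        exfalso
        rcases Nat.lt_succ_iff_lt_or_eq.mp j.2 with h | h
        · exact hleaf (Sum.inr ⟨(j : ℕ) + 1, by omega⟩) (by simp [carc])
        · exact hleaf (Sum.inl ⟨0, hn⟩) (by simp [carc, h])

lemma card_upsilon (N : PhyloNetwork (Fin n)) (f : ℕ) :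
    Multiset.card (upsilon N f) = Fintype.card N.V := by
  simp [upsilon]

lemma card_msd_ge {X : Type*} (M1 M2 : Multiset X) :
    Multiset.card M2 - Multiset.card M1 ≤ Multiset.card (msd M1 M2) := by
  have h : M2 ≤ M2 - M1 + M1 := le_tsub_add
  have := Multiset.card_le_card h
  simp only [Multiset.card_add] at this
  have : Multiset.card M2 - Multiset.card M1 ≤ Multiset.card (M2 - M1) := by omega
  calc Multiset.card M2 - Multiset.card M1 ≤ Multiset.card (M2 - M1) := this
    _ ≤ Multiset.card (M1 - M2) + Multiset.card (M2 - M1) := Nat.le_add_left _ _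
    _ = Multiset.card (msd M1 M2) := by simp [msd]

/-- Nakhleh's measure `m` is unbounded on phylogenetic networks with a fixed
leaf set: for every `n ≥ 2` and every `K`, there are phylogenetic networks
`N1, N2` on the same `n` taxa with `m(N1,N2) > K`. -/
theorem mdist_unbounded (n : ℕ) (hn : 2 ≤ n) (K : ℝ) :
    ∃ N1 N2 : PhyloNetwork (Fin n), K < mdist N1 N2 := by
  obtain ⟨m, hm⟩ := exists_nat_gt K
  have hn1 : 1 ≤ n := by omega
  refine ⟨chainNet n 0 hn1, chainNet n (2*m) hn1, ?_⟩
  set N1 := chainNet n 0 hn1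
  set N2 := chainNet n (2*m) hn1
  have hc1 : Fintype.card N1.V = n + 1 := by simp [N1, chainNet]
  have hc2 : Fintype.card N2.V = n + (2*m + 1) := by simp [N2, chainNet]
  have hge : 2 * m ≤ Multiset.card (msd (upsilon N1 (fuel N1 N2)) (upsilon N2 (fuel N1 N2))) := by
    have := card_msd_ge (upsilon N1 (fuel N1 N2)) (upsilon N2 (fuel N1 N2))
    rw [card_upsilon, card_upsilon, hc1, hc2] at this
    omega
  have : (m : ℝ) ≤ mdist N1 N2 := by
    unfold mdist
    rw [le_div_iff₀ (by norm_num : (0:ℝ) < 2)]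
    have : ((2 * m : ℕ) : ℝ) ≤ (Multiset.card (msd (upsilon N1 (fuel N1 N2)) (upsilon N2 (fuel N1 N2))) : ℝ) := by
      exact_mod_cast hge
    push_cast at this ⊢
    linarith
  linarith
end
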